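/- arXiv:1809.09776 — 3 statements merged into one kernel-verified Lean document; each statement's English description precedes it below -/
import Mathlib

section
/- Let (S, D) be a metric space, P a finite nonempty set of points in S, q ∈ S a query point, and ε > 0. Suppose c ∈ S and r ≥ 0 are such that D(p, c) ≤ r for all p ∈ P (an enclosing ball of P). If D(q, c) ≥ (1 + 2/ε)·r, then every point p ∈ P satisfies D(q, p) ≤ (1 + ε)·D(q, p*), where p* is a point of P minimizing distance to q. -/
theorem stmt_0 {S : Type*} [MetricSpace S] (P : Finset S) (hP : P.Nonempty)
    (q c : S) (ε r : ℝ) (hε : 0 < ε) (hr : 0 ≤ r)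
    (hball : ∀ p ∈ P, dist p c ≤ r)
    (hfar : (1 + 2 / ε) * r ≤ dist q c)
    (pstar : S) (hps : pstar ∈ P) (hmin : ∀ p ∈ P, dist q pstar ≤ dist q p) :
    ∀ p ∈ P, dist q p ≤ (1 + ε) * dist q pstar := by
  intro p hp
  have h1 : dist q p ≤ dist q c + r := by
    have := hball p hp
    have := dist_triangle q c p
    rw [dist_comm p c] at *
    linarith
  have h2 : dist q c - r ≤ dist q pstar := by
    have := hball pstar hps
    have := dist_triangle q pstar c
    rw [dist_comm pstar c] at *
    linarith
  have hkey : (2 + ε) * r ≤ ε * dist q c := by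
    have h := mul_le_mul_of_nonneg_left hfar hε.le
    have h2' : ε * (2 / ε) = 2 := mul_div_cancel₀ 2 hε.ne'
    nlinarith [h, h2']
  nlinarith [h1, h2, hkey]
end

section
/- Let (S, D) be a metric space, ε > 0, q ∈ S. Let P be partitioned into nonempty subsets P₁, …, P_m, with c_i ∈ P_i and r_i ≥ 0 such that D(p, c_i) ≤ r_i for all p ∈ P_i. Set rmax = max_i r_i. Suppose for some index i, D(q, c_i) ≤ (1 + 2/ε)·rmax. Then any p* ∈ P minimizing D(q, ·) over P satisfies: if p* ∈ P_j then D(c_i, c_j) ≤ (3 + 4/ε)·rmax. -/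
theorem stmt_4 {S : Type*} [MetricSpace S] (P : Finset S) (hP : P.Nonempty)
    (q : S) (ε : ℝ) (hε : 0 < ε) (m : ℕ) (hm : 0 < m)
    (Psub : Fin m → Finset S)
    (hsub : ∀ k, Psub k ⊆ P)
    (hcover : ∀ p ∈ P, ∃ k, p ∈ Psub k)
    (hdisj : ∀ k l, k ≠ l → Disjoint (Psub k) (Psub l))
    (hne : ∀ k, (Psub k).Nonempty)
    (csub : Fin m → S) (hc : ∀ k, csub k ∈ Psub k)
    (rsub : Fin m → ℝ) (hrs : ∀ k, 0 ≤ rsub k)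
    (hballs : ∀ k, ∀ p ∈ Psub k, dist p (csub k) ≤ rsub k)
    (rmax : ℝ)
    (hrmax : rmax = Finset.univ.sup' (Finset.univ_nonempty_iff.mpr ⟨⟨0, hm⟩⟩) rsub)
    (i : Fin m) (hnear : dist q (csub i) ≤ (1 + 2 / ε) * rmax)
    (pstar : S) (hps : pstar ∈ P) (hmin : ∀ p ∈ P, dist q pstar ≤ dist q p)
    (j : Fin m) (hpj : pstar ∈ Psub j) :
    dist (csub i) (csub j) ≤ (3 + 4 / ε) * rmax := by
  have hrj : rsub j ≤ rmax := by
    rw [hrmax]; exact Finset.le_sup' rsub (Finset.mem_univ j)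
  have h1 : dist q pstar ≤ (1 + 2 / ε) * rmax :=
    le_trans (hmin _ (hsub i (hc i))) hnear
  have h2 : dist pstar (csub j) ≤ rmax :=
    le_trans (hballs j pstar hpj) hrj
  calc dist (csub i) (csub j) ≤ dist (csub i) q + dist q pstar + dist pstar (csub j) :=
        dist_triangle4 _ _ _ _
    _ ≤ (1 + 2 / ε) * rmax + (1 + 2 / ε) * rmax + rmax := by
        have := dist_comm (csub i) q ▸ hnear
        rw [dist_comm (csub i) q]; exact add_le_add (add_le_add hnear h1) h2
    _ = (3 + 4 / ε) * rmax := by ring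
end

section
/- Let (S, D) be a metric space, ε > 0, q ∈ S, and let P be partitioned into P₁, …, P_m with centers c_i ∈ P_i and radii r_i ≥ 0 covering each P_i, rmax = max_i r_i. If D(q, c_i) ≤ (1 + 2/ε)·rmax for some i, and p ∈ P_k where D(c_k, c_i) > (3 + 4/ε)·rmax, then D(q, p) > (1 + 2/ε)·rmax; in particular p is not the exact nearest neighbor of q when the minimum distance from q to P is at most (1 + 2/ε)·rmax. -/
theorem stmt_5 {S : Type*} [MetricSpace S] (P : Finset S) (hP : P.Nonempty)
    (q : S) (ε : ℝ) (hε : 0 < ε) (m : ℕ) (hm : 0 < m)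
    (Psub : Fin m → Finset S)
    (hsub : ∀ k, Psub k ⊆ P)
    (hcover : ∀ p ∈ P, ∃ k, p ∈ Psub k)
    (hdisj : ∀ k l, k ≠ l → Disjoint (Psub k) (Psub l))
    (hne : ∀ k, (Psub k).Nonempty)
    (csub : Fin m → S) (hc : ∀ k, csub k ∈ Psub k)
    (rsub : Fin m → ℝ) (hrs : ∀ k, 0 ≤ rsub k)
    (hballs : ∀ k, ∀ p ∈ Psub k, dist p (csub k) ≤ rsub k)
    (rmax : ℝ)
    (hrmax : rmax = Finset.univ.sup' (Finset.univ_nonempty_iff.mpr ⟨⟨0, hm⟩⟩) rsub)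
    (i : Fin m) (hnear : dist q (csub i) ≤ (1 + 2 / ε) * rmax)
    (p : S) (k : Fin m) (hpk : p ∈ Psub k)
    (hfar : (3 + 4 / ε) * rmax < dist (csub k) (csub i)) :
    (1 + 2 / ε) * rmax < dist q p ∧
      (P.inf' hP (fun p' => dist q p') ≤ (1 + 2 / ε) * rmax →
        ¬ (∀ p' ∈ P, dist q p ≤ dist q p')) := by
  have hrk : rsub k ≤ rmax := by
    rw [hrmax]; exact Finset.le_sup' _ (Finset.mem_univ k)
  have h1 : dist p (csub k) ≤ rmax := le_trans (hballs k p hpk) hrk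
  have htri : dist (csub k) (csub i) ≤ dist (csub k) p + dist p q + dist q (csub i) :=
    dist_triangle4 _ _ _ _
  have hmain : (1 + 2 / ε) * rmax < dist q p := by
    have := hfar.trans_le htri
    rw [dist_comm (csub k) p, dist_comm p q] at this
    have h2 : (3 + 4 / ε) * rmax = rmax + (1 + 2 / ε) * rmax + (1 + 2 / ε) * rmax := by ring
    linarith
  refine ⟨hmain, fun hmin hall => ?_⟩
  obtain ⟨p', hp', hp'min⟩ := Finset.exists_mem_eq_inf' hP (fun p' => dist q p')
  have : dist q p ≤ dist q p' := hall p' hp'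
  rw [← hp'min] at this
  linarith
end
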